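/- arXiv:0901.0382 — 4 statements merged into one kernel-verified Lean document; each statement's English description precedes it below -/
import Mathlib

section
/- Let U^u(t, ω) be the restriction of a linear cocycle to finite-dimensional invariant unstable subspaces E^u(ω), invertible along the flow, satisfying ‖U^u(t,ω)‖ ≤ H_ω^Λ e^{Λ t} for t ≥ 0 (Λ > |λ₊|), and lim_{t→∞} (1/t) log ‖U^u(t,ω)x‖ = λ' ≥ λ₊ for every unit vector x ∈ E^u(ω). Fix ε > 0 and define 1/K^u(ω) := sup_{t ≥ 0} e^{(λ₊ - ε)t}/‖U^u(t,ω)‖. Then K^u(ω) ∈ (0, ∞) is well-defined, measurable, and tempered from below; moreover ‖U^u(t, ω)‖ ≥ K^u(ω) e^{(λ₊ - ε)t} for all t ≥ 0. -/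
/-!
The norm `N(t, ω)` of the restricted cocycle grows at the exact exponential rate `λ'`: for an
orthonormal basis `(bᵢ)` of `E(ω)` it lies between some `‖U(t, ω) bᵢ‖` and `∑ᵢ ‖U(t, ω) bᵢ‖`.
As `λ₊ - ε < λ'`, the function `e^{(λ₊ - ε)t} / N(t, ω)` is eventually below `1`, hence bounded,
and by continuity its supremum may be taken over rational times, which gives measurability.
For temperedness, the cocycle inequality `N(s + t, ω) ≤ N(s, θ_t ω) N(t, ω)` gives, for every
`δ > 0` and all large `t`,
`e^{(λ₊ - ε)s} / N(s, θ_t ω) ≤ e^{(λ₊ - ε)s} N(t, ω) / N(s + t, ω) ≤ e^{2δt}`,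
so the invariant set can be taken to be all of `Ω`.
-/

open MeasureTheory Filter
open Real Set Topology

lemma eventually_le_exp_of_tendsto_log_div {a : ℝ → ℝ} {μ ν : ℝ}
    (ha : Tendsto (fun t => log (a t) / t) atTop (𝓝 μ)) (hν : μ < ν) :
    ∀ᶠ t in atTop, a t ≤ exp (ν * t) := by
  filter_upwards [ha.eventually_lt_const hν, eventually_gt_atTop 0] with t hlt ht
  rcases le_or_gt (a t) 0 with ha0 | ha0
  · exact ha0.trans (exp_pos _).le
  · rw [div_lt_iff₀ ht] at hlt
    exact (log_le_iff_le_exp ha0).1 hlt.le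

lemma eventually_exp_le_of_tendsto_log_div {a : ℝ → ℝ} {μ ν : ℝ}
    (ha : Tendsto (fun t => log (a t) / t) atTop (𝓝 μ)) (hν : ν < μ) :
    ∀ᶠ t in atTop, 0 < a t → exp (ν * t) ≤ a t := by
  filter_upwards [ha.eventually_const_lt hν, eventually_gt_atTop 0] with t hlt ht ha0
  rw [lt_div_iff₀ ht] at hlt
  exact ((lt_log_iff_exp_lt ha0).1 hlt).le

lemma eventually_natCast_mul_exp_le_exp (k : ℕ) {ν ν' : ℝ} (h : ν < ν') :
    ∀ᶠ t in atTop, k * exp (ν * t) ≤ exp (ν' * t) := by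
  have hgrow : Tendsto (fun t => exp ((ν' - ν) * t)) atTop atTop :=
    tendsto_exp_atTop.comp (tendsto_id.const_mul_atTop (sub_pos.2 h))
  filter_upwards [hgrow.eventually_ge_atTop (k : ℝ)] with t ht
  calc k * exp (ν * t) ≤ exp ((ν' - ν) * t) * exp (ν * t) := by gcongr
    _ = exp (ν' * t) := by rw [← exp_add]; ring_nf

section FiniteFamily

variable {ι : Type*} [Fintype ι] {a : ι → ℝ → ℝ} {μ ν : ℝ}

lemma eventually_sum_le_exp_of_tendsto_log_div
    (ha : ∀ i, Tendsto (fun t => log (a i t) / t) atTop (𝓝 μ)) (hν : μ < ν) :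
    ∀ᶠ t in atTop, ∑ i, a i t ≤ exp (ν * t) := by
  obtain ⟨ν', hμν', hν'ν⟩ := exists_between hν
  filter_upwards [eventually_all.2 fun i => eventually_le_exp_of_tendsto_log_div (ha i) hμν',
    eventually_natCast_mul_exp_le_exp (Fintype.card ι) hν'ν] with t hle hcard
  calc ∑ i, a i t ≤ ∑ _i : ι, exp (ν' * t) := Finset.sum_le_sum fun i _ => hle i
    _ = Fintype.card ι * exp (ν' * t) := by simp
    _ ≤ exp (ν * t) := hcard

lemma eventually_exp_le_of_forall_le_of_sum_pos {n : ℝ → ℝ}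
    (ha : ∀ i, Tendsto (fun t => log (a i t) / t) atTop (𝓝 μ)) (hν : ν < μ)
    (hle : ∀ i t, a i t ≤ n t) (hpos : ∀ᶠ t in atTop, 0 < ∑ i, a i t) :
    ∀ᶠ t in atTop, exp (ν * t) ≤ n t := by
  filter_upwards [eventually_all.2 fun i => eventually_exp_le_of_tendsto_log_div (ha i) hν,
    hpos] with t hexp hsum
  obtain ⟨i, -, hi⟩ := Finset.exists_lt_of_sum_lt (s := Finset.univ) (f := 0) (g := fun i => a i t)
    (by simpa using hsum)
  exact (hexp i hi).trans (hle i t)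

end FiniteFamily

lemma OrthonormalBasis.norm_apply_le_sum {ι 𝕜 E F : Type*} [Fintype ι] [RCLike 𝕜]
    [NormedAddCommGroup E] [InnerProductSpace 𝕜 E] [SeminormedAddCommGroup F] [NormedSpace 𝕜 F]
    (b : OrthonormalBasis ι 𝕜 E) (T : E →ₗ[𝕜] F) {x : E} (hx : ‖x‖ ≤ 1) :
    ‖T x‖ ≤ ∑ i, ‖T (b i)‖ := by
  conv_lhs => rw [← b.sum_repr x, map_sum]
  refine (norm_sum_le _ _).trans (Finset.sum_le_sum fun i _ => ?_)
  have hcoeff : ‖b.repr x i‖ ≤ 1 := by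
    rw [b.repr_apply_apply]
    exact (norm_inner_le_norm _ _).trans (by rw [b.orthonormal.1 i, one_mul]; exact hx)
  rw [map_smul, norm_smul]
  exact mul_le_of_le_one_left (norm_nonneg _) hcoeff

section RestrictedNorm

variable {H : Type*} [NormedAddCommGroup H] [InnerProductSpace ℝ H] (E : Submodule ℝ H)

noncomputable def restrictedNorm (T : H →L[ℝ] H) : ℝ :=
  sSup ((fun x : H => ‖T x‖) '' {x | x ∈ E ∧ ‖x‖ ≤ 1})

variable {E}

lemma norm_apply_le_restrictedNorm (T : H →L[ℝ] H) {x : H} (hxE : x ∈ E) (hx : ‖x‖ ≤ 1) :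
    ‖T x‖ ≤ restrictedNorm E T := by
  refine le_csSup ⟨‖T‖, ?_⟩ ⟨x, ⟨hxE, hx⟩, rfl⟩
  rintro _ ⟨y, ⟨-, hy⟩, rfl⟩
  exact (T.le_opNorm y).trans (mul_le_of_le_one_right (norm_nonneg _) hy)

lemma restrictedNorm_le_sum {ι : Type*} [Fintype ι] (b : OrthonormalBasis ι ℝ E)
    (T : H →L[ℝ] H) : restrictedNorm E T ≤ ∑ i, ‖T (b i)‖ := by
  refine csSup_le ⟨_, 0, ⟨E.zero_mem, by simp⟩, rfl⟩ ?_
  rintro _ ⟨x, ⟨hxE, hx⟩, rfl⟩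
  exact b.norm_apply_le_sum ((T : H →ₗ[ℝ] H).comp E.subtype) (x := ⟨x, hxE⟩) hx

variable [FiniteDimensional ℝ E] {T : ℝ → H →L[ℝ] H} {μ ν : ℝ}

lemma eventually_restrictedNorm_le_exp
    (hlim : ∀ x ∈ E, ‖x‖ = 1 → Tendsto (fun t => log ‖T t x‖ / t) atTop (𝓝 μ)) (hν : μ < ν) :
    ∀ᶠ t in atTop, restrictedNorm E (T t) ≤ exp (ν * t) := by
  set b := stdOrthonormalBasis ℝ E
  have hb : ∀ i, Tendsto (fun t => log ‖T t (b i)‖ / t) atTop (𝓝 μ) := fun i =>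
    hlim _ (b i).2 (b.orthonormal.1 i)
  filter_upwards [eventually_sum_le_exp_of_tendsto_log_div hb hν] with t ht
  exact (restrictedNorm_le_sum b (T t)).trans ht

lemma eventually_exp_le_restrictedNorm
    (hlim : ∀ x ∈ E, ‖x‖ = 1 → Tendsto (fun t => log ‖T t x‖ / t) atTop (𝓝 μ)) (hν : ν < μ)
    (hpos : ∀ᶠ t in atTop, 0 < restrictedNorm E (T t)) :
    ∀ᶠ t in atTop, exp (ν * t) ≤ restrictedNorm E (T t) := by
  set b := stdOrthonormalBasis ℝ E
  have hb : ∀ i, Tendsto (fun t => log ‖T t (b i)‖ / t) atTop (𝓝 μ) := fun i =>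
    hlim _ (b i).2 (b.orthonormal.1 i)
  refine eventually_exp_le_of_forall_le_of_sum_pos hb hν
    (fun i t => norm_apply_le_restrictedNorm (T t) (b i).2 (b.orthonormal.1 i).le) ?_
  filter_upwards [hpos] with t ht
  exact ht.trans_le (restrictedNorm_le_sum b (T t))

end RestrictedNorm

lemma ContinuousOn.bddAbove_image_Ici_of_eventually_le {f : ℝ → ℝ} {a C : ℝ}
    (hf : ContinuousOn f (Ici a)) (hC : ∀ᶠ t in atTop, f t ≤ C) : BddAbove (f '' Ici a) := by
  obtain ⟨T, hT⟩ := eventually_atTop.1 hC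
  obtain ⟨M, hM⟩ := (isCompact_Icc (a := a) (b := T)).bddAbove_image
    (hf.mono Icc_subset_Ici_self)
  refine ⟨max M C, ?_⟩
  rintro _ ⟨t, ht, rfl⟩
  rcases le_total t T with htT | hTt
  · exact le_max_of_le_left (hM ⟨t, ⟨ht, htT⟩, rfl⟩)
  · exact le_max_of_le_right (hT t hTt)

lemma ContinuousOn.sSup_image_Ici_eq_iSup_rat {f : ℝ → ℝ} (hf : ContinuousOn f (Ici 0))
    (hbdd : BddAbove (f '' Ici 0)) : sSup (f '' Ici 0) = ⨆ q : ℚ, f |(q : ℝ)| := by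
  set D := range fun q : ℚ => |(q : ℝ)|
  have hD : D ⊆ Ici 0 := by
    rintro _ ⟨q, rfl⟩
    exact mem_Ici.2 (abs_nonneg _)
  have hD_dense : Ici 0 ⊆ closure D := by
    intro t (ht : 0 ≤ t)
    have hcl : |t| ∈ closure (abs '' range ((↑) : ℚ → ℝ)) :=
      image_closure_subset_closure_image continuous_abs
        ⟨t, by simp [Rat.denseRange_cast.closure_range], rfl⟩
    rwa [← range_comp, abs_of_nonneg ht] at hcl
  have hrange : range (fun q : ℚ => f |(q : ℝ)|) = f '' D := by
    rw [← range_comp]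
    rfl
  have hlub : IsLUB (range fun q : ℚ => f |(q : ℝ)|) (⨆ q : ℚ, f |(q : ℝ)|) :=
    isLUB_ciSup (hbdd.mono (hrange ▸ image_mono hD))
  refine ((isLUB_iff_of_subset_of_subset_closure (hrange ▸ image_mono hD) ?_).1 hlub).csSup_eq
    (nonempty_Ici.image f)
  calc f '' Ici 0 ⊆ f '' closure D := image_mono hD_dense
    _ ⊆ closure (f '' D) := (hf.mono (isClosed_Ici.closure_subset_iff.2 hD)).image_closure
    _ = closure (range fun q : ℚ => f |(q : ℝ)|) := by rw [hrange]

/-- The paper's `1 / K^u(ω)` is `invK (λ₊ - ε) (fun t => N t ω)`. -/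
noncomputable def invK (c : ℝ) (n : ℝ → ℝ) : ℝ :=
  sSup ((fun t => exp (c * t) / n t) '' Ici 0)

section InvK

variable {c : ℝ} {n : ℝ → ℝ}

lemma continuousOn_exp_mul_div (hn : ContinuousOn n (Ici 0)) (hpos : ∀ t, 0 ≤ t → 0 < n t) :
    ContinuousOn (fun t => exp (c * t) / n t) (Ici 0) :=
  (by fun_prop : Continuous fun t => exp (c * t)).continuousOn.div hn fun t ht => (hpos t ht).ne'

lemma invK_pos (hbdd : BddAbove ((fun t => exp (c * t) / n t) '' Ici 0)) (hn0 : 0 < n 0) :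
    0 < invK c n :=
  (div_pos (exp_pos _) hn0).trans_le (le_csSup hbdd ⟨0, self_mem_Ici, rfl⟩)

lemma inv_invK_mul_exp_le (hbdd : BddAbove ((fun t => exp (c * t) / n t) '' Ici 0))
    (hpos : ∀ t, 0 ≤ t → 0 < n t) {t : ℝ} (ht : 0 ≤ t) : (invK c n)⁻¹ * exp (c * t) ≤ n t := by
  have hle : exp (c * t) / n t ≤ invK c n := le_csSup hbdd ⟨t, ht, rfl⟩
  rw [div_le_iff₀ (hpos t ht)] at hle
  rwa [inv_mul_le_iff₀ (invK_pos hbdd (hpos 0 le_rfl))]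

lemma invK_le {B : ℝ} (hpos : ∀ s, 0 ≤ s → 0 < n s) (h : ∀ s, 0 ≤ s → exp (c * s) ≤ B * n s) :
    invK c n ≤ B := by
  refine csSup_le (nonempty_Ici.image _) ?_
  rintro _ ⟨s, hs, rfl⟩
  exact (div_le_iff₀ (hpos s hs)).2 (h s hs)

lemma measurable_invK {Ω : Type*} [MeasurableSpace Ω] {n : ℝ → Ω → ℝ}
    (hmeas : ∀ t, Measurable (n t)) (hcont : ∀ ω, ContinuousOn (fun t => n t ω) (Ici 0))
    (hpos : ∀ ω t, 0 ≤ t → 0 < n t ω)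
    (hbdd : ∀ ω, BddAbove ((fun t => exp (c * t) / n t ω) '' Ici 0)) :
    Measurable fun ω => invK c (fun t => n t ω) := by
  have hsup : (fun ω => invK c (fun t => n t ω)) =
      fun ω => ⨆ q : ℚ, exp (c * |(q : ℝ)|) / n |(q : ℝ)| ω :=
    funext fun ω => (continuousOn_exp_mul_div (hcont ω) (hpos ω)).sSup_image_Ici_eq_iSup_rat (hbdd ω)
  rw [hsup]
  exact Measurable.iSup fun q => measurable_const.div (hmeas _)

lemma tendsto_max_log_invK_div {μ : ℝ} {m : ℝ → ℝ → ℝ} (hc : c < μ)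
    (hm_pos : ∀ t s, 0 ≤ s → 0 < m t s) (hK_pos : ∀ t, 0 < invK c (m t))
    (hsub : ∀ s t, 0 ≤ s → 0 ≤ t → n (s + t) ≤ m t s * n t)
    (hlow : ∀ ν < μ, ∀ᶠ t in atTop, exp (ν * t) ≤ n t)
    (hup : ∀ ν, μ < ν → ∀ᶠ t in atTop, n t ≤ exp (ν * t)) :
    Tendsto (fun t => max (log (invK c (m t))) 0 / t) atTop (𝓝 0) := by
  refine tendsto_order.2 ⟨fun a ha => ?_, fun a ha => ?_⟩
  · filter_upwards [eventually_gt_atTop 0] with t ht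
    exact ha.trans_le (div_nonneg (le_max_right _ _) ht.le)
  set δ := min (a / 4) (μ - c)
  have hδ : 0 < δ := lt_min (by linarith) (sub_pos.2 hc)
  obtain ⟨T, hT⟩ := eventually_atTop.1 (hlow (μ - δ) (by linarith))
  filter_upwards [eventually_ge_atTop (max T 0), hup (μ + δ) (by linarith),
    eventually_gt_atTop 0] with t htT hnt ht
  have hK : invK c (m t) ≤ exp (2 * δ * t) := by
    refine invK_le (hm_pos t) fun s hs => ?_
    have hchain : exp ((μ - δ) * (s + t)) ≤ m t s * exp ((μ + δ) * t) :=
      (hT _ (by linarith [le_max_left T 0, le_max_right T 0])).trans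
        ((hsub s t hs ht.le).trans (by gcongr; exact (hm_pos t s hs).le))
    calc exp (c * s) ≤ exp (2 * δ * t + ((μ - δ) * (s + t) - (μ + δ) * t)) := by
          gcongr
          nlinarith [min_le_right (a / 4) (μ - c)]
      _ = exp (2 * δ * t) * (exp ((μ - δ) * (s + t)) / exp ((μ + δ) * t)) := by
          rw [exp_add, exp_sub]
      _ ≤ exp (2 * δ * t) * m t s := by
          gcongr
          exact (div_le_iff₀ (exp_pos _)).2 hchain
  have hlog : max (log (invK c (m t))) 0 ≤ 2 * δ * t :=
    max_le ((log_le_iff_le_exp (hK_pos t)).2 hK) (by positivity)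
  calc max (log (invK c (m t))) 0 / t ≤ 2 * δ := (div_le_iff₀ ht).2 hlog
    _ < a := by linarith [min_le_left (a / 4) (μ - c)]

end InvK

theorem stmt_9_general {Ω H : Type*} [MeasurableSpace Ω] (P : Measure Ω)
    [NormedAddCommGroup H] [InnerProductSpace ℝ H]
    (θ : ℝ → Ω → Ω)
    (U : ℝ → Ω → H →L[ℝ] H)
    (E : Ω → Submodule ℝ H) (hE_fd : ∀ ω, FiniteDimensional ℝ (E ω))
    -- N is the operator norm of the restriction of U to the unstable subspaces
    (N : ℝ → Ω → ℝ)
    (hN : ∀ t ω, N t ω = sSup ((fun x : H => ‖U t ω x‖) '' {x | x ∈ E ω ∧ ‖x‖ ≤ 1}))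
    (hN_pos : ∀ ω, ∀ t : ℝ, 0 ≤ t → 0 < N t ω)
    (hN_cont : ∀ ω, ContinuousOn (fun t => N t ω) (Set.Ici 0))
    (hN_meas : ∀ t : ℝ, Measurable fun ω => N t ω)
    (hN_sub : ∀ ω, ∀ s t : ℝ, 0 ≤ s → 0 ≤ t → N (t + s) ω ≤ N t (θ s ω) * N s ω)
    (lamPlus lam' ε : ℝ) (hε : 0 < ε) (hlam : lamPlus ≤ lam')
    (hlim : ∀ ω, ∀ x : H, x ∈ E ω → ‖x‖ = 1 →
      Tendsto (fun t : ℝ => Real.log ‖U t ω x‖ / t) atTop (nhds lam')) :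
    (∀ ω, BddAbove ((fun t : ℝ => Real.exp ((lamPlus - ε) * t) / N t ω) '' Set.Ici 0) ∧
      0 < sSup ((fun t : ℝ => Real.exp ((lamPlus - ε) * t) / N t ω) '' Set.Ici 0)) ∧
    Measurable (fun ω =>
      sSup ((fun t : ℝ => Real.exp ((lamPlus - ε) * t) / N t ω) '' Set.Ici 0)) ∧
    (∀ ω, ∀ t : ℝ, 0 ≤ t →
      (sSup ((fun t : ℝ => Real.exp ((lamPlus - ε) * t) / N t ω) '' Set.Ici 0))⁻¹ *
        Real.exp ((lamPlus - ε) * t) ≤ N t ω) ∧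
    (∃ S : Set Ω, MeasurableSet S ∧ P Sᶜ = 0 ∧ (∀ t : ℝ, ∀ ω ∈ S, θ t ω ∈ S) ∧
      ∀ ω ∈ S, Tendsto (fun t : ℝ => max (Real.log
        (sSup ((fun s : ℝ => Real.exp ((lamPlus - ε) * s) / N s (θ t ω)) '' Set.Ici 0))) 0 / t)
        atTop (nhds 0)) := by
  have hup : ∀ ω ν, lam' < ν → ∀ᶠ t in atTop, N t ω ≤ exp (ν * t) := fun ω ν hν => by
    have := hE_fd ω
    filter_upwards [eventually_restrictedNorm_le_exp (hlim ω) hν] with t ht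
    rwa [hN]
  have hlow : ∀ ω, ∀ ν < lam', ∀ᶠ t in atTop, exp (ν * t) ≤ N t ω := fun ω ν hν => by
    have := hE_fd ω
    have hpos : ∀ᶠ t in atTop, 0 < restrictedNorm (E ω) (U t ω) := by
      filter_upwards [eventually_ge_atTop 0] with t ht
      have hNt := hN_pos ω t ht
      rwa [hN] at hNt
    filter_upwards [eventually_exp_le_restrictedNorm (hlim ω) hν hpos] with t ht
    rwa [hN]
  have hbdd : ∀ ω, BddAbove ((fun t => exp ((lamPlus - ε) * t) / N t ω) '' Ici 0) := fun ω =>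
    (continuousOn_exp_mul_div (hN_cont ω) (hN_pos ω)).bddAbove_image_Ici_of_eventually_le
      (C := 1) <| by
        filter_upwards [hlow ω (lamPlus - ε) (by linarith), eventually_ge_atTop 0] with t ht ht0
        exact (div_le_one (hN_pos ω t ht0)).2 ht
  have hK_pos : ∀ ω, 0 < invK (lamPlus - ε) (fun t => N t ω) := fun ω =>
    invK_pos (hbdd ω) (hN_pos ω 0 le_rfl)
  refine ⟨fun ω => ⟨hbdd ω, hK_pos ω⟩, measurable_invK hN_meas hN_cont hN_pos hbdd,
    fun ω t ht => inv_invK_mul_exp_le (hbdd ω) (hN_pos ω) ht,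
    univ, MeasurableSet.univ, by simp, fun _ _ _ => mem_univ _, fun ω _ => ?_⟩
  exact tendsto_max_log_invK_div (by linarith) (fun _ s hs => hN_pos _ s hs) (fun _ => hK_pos _)
    (fun s t hs ht => hN_sub ω t s ht hs) (hlow ω) (hup ω)

theorem stmt_9 {Ω H : Type*} [MeasurableSpace Ω] (P : Measure Ω) [IsProbabilityMeasure P]
    [NormedAddCommGroup H] [InnerProductSpace ℝ H] [CompleteSpace H]
    [TopologicalSpace.SeparableSpace H]
    (θ : ℝ → Ω → Ω)
    (hθ_meas : Measurable fun p : ℝ × Ω => θ p.1 p.2)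
    (hθ0 : θ 0 = id)
    (hθ_flow : ∀ s t : ℝ, θ t ∘ θ s = θ (t + s))
    (hθ_pres : ∀ t : ℝ, MeasurePreserving (θ t) P P)
    (U : ℝ → Ω → H →L[ℝ] H)
    (E : Ω → Submodule ℝ H) (hE_fd : ∀ ω, FiniteDimensional ℝ (E ω))
    (hE_inv : ∀ t : ℝ, 0 ≤ t → ∀ ω, Submodule.map (U t ω : H →ₗ[ℝ] H) (E ω) = E (θ t ω))
    -- N is the operator norm of the restriction of U to the unstable subspaces
    (N : ℝ → Ω → ℝ)
    (hN : ∀ t ω, N t ω = sSup ((fun x : H => ‖U t ω x‖) '' {x | x ∈ E ω ∧ ‖x‖ ≤ 1}))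
    (hN_pos : ∀ ω, ∀ t : ℝ, 0 ≤ t → 0 < N t ω)
    (hN_cont : ∀ ω, ContinuousOn (fun t => N t ω) (Set.Ici 0))
    (hN_meas : ∀ t : ℝ, Measurable fun ω => N t ω)
    (hN_sub : ∀ ω, ∀ s t : ℝ, 0 ≤ s → 0 ≤ t → N (t + s) ω ≤ N t (θ s ω) * N s ω)
    (Λ lamPlus lam' ε : ℝ) (hε : 0 < ε) (hΛ : |lamPlus| < Λ) (hlam : lamPlus ≤ lam')
    (Hc : Ω → ℝ) (hHc_pos : ∀ ω, 0 < Hc ω)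
    (hbound : ∀ ω, ∀ t : ℝ, 0 ≤ t → N t ω ≤ Hc ω * Real.exp (Λ * t))
    (hlim : ∀ ω, ∀ x : H, x ∈ E ω → ‖x‖ = 1 →
      Tendsto (fun t : ℝ => Real.log ‖U t ω x‖ / t) atTop (nhds lam')) :
    (∀ ω, BddAbove ((fun t : ℝ => Real.exp ((lamPlus - ε) * t) / N t ω) '' Set.Ici 0) ∧
      0 < sSup ((fun t : ℝ => Real.exp ((lamPlus - ε) * t) / N t ω) '' Set.Ici 0)) ∧
    Measurable (fun ω =>
      sSup ((fun t : ℝ => Real.exp ((lamPlus - ε) * t) / N t ω) '' Set.Ici 0)) ∧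
    (∀ ω, ∀ t : ℝ, 0 ≤ t →
      (sSup ((fun t : ℝ => Real.exp ((lamPlus - ε) * t) / N t ω) '' Set.Ici 0))⁻¹ *
        Real.exp ((lamPlus - ε) * t) ≤ N t ω) ∧
    (∃ S : Set Ω, MeasurableSet S ∧ P Sᶜ = 0 ∧ (∀ t : ℝ, ∀ ω ∈ S, θ t ω ∈ S) ∧
      ∀ ω ∈ S, Tendsto (fun t : ℝ => max (Real.log
        (sSup ((fun s : ℝ => Real.exp ((lamPlus - ε) * s) / N s (θ t ω)) '' Set.Ici 0))) 0 / t)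
        atTop (nhds 0)) :=
  stmt_9_general P θ U E hE_fd N hN hN_pos hN_cont hN_meas hN_sub lamPlus lam' ε hε hlam hlim
end

section
/- Let ν > 0 and let ω ∈ C₀(ℝ, ℝ) be a continuous path with ω(0) = 0 satisfying lim_{t→±∞} ω(t)/t = 0. Then z*(θ_t ω) := −ν ∫_{−∞}^0 e^{ντ} ω(t+τ) dτ + ω(t) is well-defined for all t ∈ ℝ, (t, ω-path fixed) t ↦ z*(θ_t ω) is continuous, and it solves the integral form of dz = −ν z dt + dω, namely z*(θ_t ω) = z*(ω) − ν ∫₀^t z*(θ_s ω) ds + ω(t) for all t ∈ ℝ. Moreover lim_{t→±∞} |z*(θ_t ω)|/|t| = 0. -/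
/-! Linear growth of `ω` makes every integral converge. With `G t = ∫_{-∞}^t e^{νσ} ω σ dσ` one has
`z*(θ_t ω) = ω t - ν e^{-νt} G t`, so `(z* ∘ θ_· ω - ω)' = -ν z*(θ_· ω)`, which integrates to the
equation. Since `ν e^{ντ} dτ` is a probability measure on `(-∞, 0]`,
`z*(θ_t ω) / t = ∫ ν e^{ντ} (ω t - ω (t + τ)) / t dτ`, and this tends to `0` by dominated
convergence. -/

open MeasureTheory Filter Set Real Topology

lemma integrableOn_exp_mul_mul_one_add_abs_Iic {c : ℝ} (hc : 0 < c) :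
    IntegrableOn (fun τ => exp (c * τ) * (1 + |τ|)) (Iic 0) := by
  refine Integrable.mono' ((integrableOn_exp_mul_Iic (half_pos hc) 0).const_mul (1 + 2 / c))
    (by fun_prop) ?_
  rw [ae_restrict_iff' measurableSet_Iic]
  refine ae_of_all _ fun τ (hτ : τ ≤ 0) => ?_
  have hpoly : 1 + |τ| ≤ (1 + 2 / c) * (1 + -(c / 2 * τ)) := by
    have : (1 + 2 / c) * (1 + -(c / 2 * τ)) = 1 - τ + (2 / c - c / 2 * τ) := by
      field_simp; ring
    rw [this, abs_of_nonpos hτ]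
    nlinarith [div_pos two_pos hc]
  have hexp : exp (c * τ) * exp (-(c / 2 * τ)) = exp (c / 2 * τ) := by
    rw [← exp_add]; ring_nf
  rw [norm_of_nonneg (by positivity)]
  calc exp (c * τ) * (1 + |τ|)
      ≤ exp (c * τ) * ((1 + 2 / c) * exp (-(c / 2 * τ))) := by
        gcongr
        exact hpoly.trans (by gcongr; linarith [add_one_le_exp (-(c / 2 * τ))])
    _ = (1 + 2 / c) * exp (c / 2 * τ) := by rw [mul_left_comm, hexp]

lemma exists_abs_le_mul_one_add_abs {w : ℝ → ℝ} (hw : Continuous w)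
    (hw_sub : Tendsto (fun t => w t / t) (cocompact ℝ) (𝓝 0)) :
    ∃ C, ∀ s, |w s| ≤ C * (1 + |s|) := by
  have hpos : ∀ s : ℝ, 0 < 1 + |s| := fun s => by positivity
  let f : ZeroAtInftyContinuousMap ℝ ℝ :=
    { toFun := fun s => w s / (1 + |s|)
      continuous_toFun := hw.div (by fun_prop) fun s => (hpos s).ne'
      zero_at_infty' := by
        have hbdd : IsBoundedUnder (· ≤ ·) (cocompact ℝ) (fun s : ℝ => ‖s / (1 + |s|)‖) :=
          isBoundedUnder_of ⟨1, fun s => by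
            simp only [norm_div, Real.norm_eq_abs]
            rw [abs_of_pos (hpos s), div_le_one (hpos s)]
            linarith⟩
        refine (hw_sub.zero_mul_isBoundedUnder_le hbdd).congr' ?_
        filter_upwards [(isCompact_singleton (x := (0:ℝ))).compl_mem_cocompact] with s hs
        field_simp [show s ≠ 0 from hs] }
  obtain ⟨C, hC⟩ := f.isBounded_range.exists_norm_le
  refine ⟨C, fun s => ?_⟩
  have : |w s / (1 + |s|)| ≤ C := hC _ (mem_range_self s)
  rwa [abs_div, abs_of_pos (hpos s), div_le_iff₀ (hpos s)] at this

lemma integral_Iic_comp_add {E : Type*} [NormedAddCommGroup E] [NormedSpace ℝ E] (f : ℝ → E)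
    (t : ℝ) : ∫ τ in Iic (0:ℝ), f (t + τ) = ∫ σ in Iic t, f σ := by
  have h := (measurePreserving_add_left volume t).setIntegral_preimage_emb
    (MeasurableEquiv.addLeft t).measurableEmbedding f (Iic t)
  rwa [show (t + ·) ⁻¹' Iic t = Iic 0 by ext; simp] at h

lemma integral_Iic_exp_mul_mul_comp_add (ν : ℝ) (w : ℝ → ℝ) (t : ℝ) :
    ∫ τ in Iic (0:ℝ), exp (ν * τ) * w (t + τ) =
      exp (-(ν * t)) * ∫ σ in Iic t, exp (ν * σ) * w σ := by
  rw [← integral_Iic_comp_add (fun σ => exp (ν * σ) * w σ) t, ← integral_const_mul]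
  congr 1 with τ
  rw [← mul_assoc, ← exp_add]
  ring_nf

lemma hasDerivAt_integral_Iic {E : Type*} [NormedAddCommGroup E] [NormedSpace ℝ E]
    [CompleteSpace E] {f : ℝ → E} {a : ℝ} (hf : Continuous f) (hfa : IntegrableOn f (Iic a))
    (t : ℝ) : HasDerivAt (fun u => ∫ x in Iic u, f x) (f t) t := by
  have hint (u : ℝ) : IntegrableOn f (Iic u) :=
    (hfa.union (hf.integrableOn_Icc (a := a) (b := u))).mono_set fun x (hx : x ≤ u) => by
      rcases le_total x a with h | h
      exacts [Or.inl h, Or.inr ⟨h, hx⟩]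
  have hsplit : (fun u => ∫ x in Iic u, f x) = fun u => (∫ x in Iic a, f x) + ∫ x in a..u, f x := by
    funext u
    rw [← intervalIntegral.integral_Iic_sub_Iic (hint a) (hint u), add_sub_cancel]
  rw [hsplit]
  exact (intervalIntegral.integral_hasDerivAt_right (hf.intervalIntegrable a t)
    (hf.stronglyMeasurableAtFilter volume (𝓝 t)) hf.continuousAt).const_add _

lemma tendsto_comp_add_div_cocompact {w : ℝ → ℝ}
    (hw_sub : Tendsto (fun t => w t / t) (cocompact ℝ) (𝓝 0)) (τ : ℝ) :
    Tendsto (fun t => w (t + τ) / t) (cocompact ℝ) (𝓝 0) := by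
  have hshift : Tendsto (· + τ) (cocompact ℝ) (cocompact ℝ) :=
    (Homeomorph.addRight τ).isClosedEmbedding.tendsto_cocompact
  have hinv : Tendsto (fun t : ℝ => t⁻¹) (cocompact ℝ) (𝓝 0) :=
    Metric.cobounded_eq_cocompact (α := ℝ) ▸ tendsto_inv₀_cobounded
  have hratio : Tendsto (fun t : ℝ => 1 + τ * t⁻¹) (cocompact ℝ) (𝓝 1) := by
    simpa using (hinv.const_mul τ).const_add 1
  refine ((hw_sub.comp hshift).mul hratio).congr' ?_ |>.trans (by rw [zero_mul])
  filter_upwards [(isCompact_singleton (x := (0:ℝ))).compl_mem_cocompact,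
    (isCompact_singleton (x := -τ)).compl_mem_cocompact] with t h0 hτ
  have : t + τ ≠ 0 := fun h => hτ (eq_neg_of_add_eq_zero_left h)
  simp only [Function.comp_apply]
  field_simp [show t ≠ 0 from h0]

/-- `z*(θ_t ω)` for `ω = w`: the `- ω t` in `θ_t ω` contributes `+ w t`, because `ν exp (ν τ)` is a
probability density on `Iic 0`. -/
noncomputable def stationaryOU (ν : ℝ) (w : ℝ → ℝ) (t : ℝ) : ℝ :=
  -ν * (∫ τ in Iic (0:ℝ), exp (ν * τ) * w (t + τ)) + w t

section

variable {ν C : ℝ} {w : ℝ → ℝ}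

lemma integrableOn_exp_mul_mul_comp_add (hν : 0 < ν) (hw : Continuous w)
    (hC : ∀ s, |w s| ≤ C * (1 + |s|)) (t : ℝ) :
    IntegrableOn (fun τ => exp (ν * τ) * w (t + τ)) (Iic 0) := by
  have hC0 : 0 ≤ C := by simpa using (abs_nonneg (w 0)).trans (hC 0)
  refine Integrable.mono'
    ((integrableOn_exp_mul_mul_one_add_abs_Iic hν).const_mul (C * (1 + |t|)))
    (by fun_prop) (ae_of_all _ fun τ => ?_)
  have hgrowth : 1 + |t + τ| ≤ (1 + |t|) * (1 + |τ|) := by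
    nlinarith [abs_add_le t τ, abs_nonneg t, abs_nonneg τ]
  rw [norm_mul, norm_of_nonneg (exp_pos _).le, Real.norm_eq_abs]
  calc exp (ν * τ) * |w (t + τ)| ≤ exp (ν * τ) * (C * ((1 + |t|) * (1 + |τ|))) := by
        gcongr
        exact (hC _).trans (mul_le_mul_of_nonneg_left hgrowth hC0)
    _ = C * (1 + |t|) * (exp (ν * τ) * (1 + |τ|)) := by ring

lemma stationaryOU_eq_integral (hν : 0 < ν) (hw : Continuous w)
    (hC : ∀ s, |w s| ≤ C * (1 + |s|)) (t : ℝ) :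
    stationaryOU ν w t = ∫ τ in Iic (0:ℝ), ν * exp (ν * τ) * (w t - w (t + τ)) := by
  have h1 : IntegrableOn (fun τ => ν * exp (ν * τ) * w t) (Iic 0) :=
    ((integrableOn_exp_mul_Iic hν 0).const_mul ν).mul_const (w t)
  have h2 : IntegrableOn (fun τ => ν * (exp (ν * τ) * w (t + τ))) (Iic 0) :=
    (integrableOn_exp_mul_mul_comp_add hν hw hC t).const_mul ν
  calc stationaryOU ν w t
      = (∫ τ in Iic (0:ℝ), ν * exp (ν * τ) * w t)
          - ∫ τ in Iic (0:ℝ), ν * (exp (ν * τ) * w (t + τ)) := by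
        rw [integral_mul_const, integral_const_mul, integral_const_mul,
          integral_exp_mul_Iic hν, mul_zero, exp_zero, mul_one_div_cancel hν.ne', stationaryOU]
        ring
    _ = _ := by
        rw [← integral_sub h1 h2]
        congr 1 with τ
        ring

lemma hasDerivAt_stationaryOU_sub (hν : 0 < ν) (hw : Continuous w)
    (hC : ∀ s, |w s| ≤ C * (1 + |s|)) (t : ℝ) :
    HasDerivAt (fun s => stationaryOU ν w s - w s) (-ν * stationaryOU ν w t) t := by
  set G := fun u => ∫ σ in Iic u, exp (ν * σ) * w σ
  have hG : HasDerivAt G (exp (ν * t) * w t) t :=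
    hasDerivAt_integral_Iic (by fun_prop) (a := 0)
      (by simpa using integrableOn_exp_mul_mul_comp_add hν hw hC 0) t
  have hexp : HasDerivAt (fun s => exp (-(ν * s))) (-ν * exp (-(ν * t))) t := by
    simpa [mul_comm] using ((hasDerivAt_id t).const_mul ν).neg.exp
  have hsub : (fun s => stationaryOU ν w s - w s) = fun s => -ν * (exp (-(ν * s)) * G s) := by
    funext s
    simp [stationaryOU, G, integral_Iic_exp_mul_mul_comp_add]
  have hcancel : exp (-(ν * t)) * exp (ν * t) = 1 := by rw [← exp_add]; simp
  rw [hsub]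
  refine ((hexp.mul hG).const_mul (-ν)).congr_deriv ?_
  rw [stationaryOU, integral_Iic_exp_mul_mul_comp_add]
  linear_combination (-ν * w t) * hcancel

lemma continuous_stationaryOU (hν : 0 < ν) (hw : Continuous w)
    (hC : ∀ s, |w s| ≤ C * (1 + |s|)) : Continuous (stationaryOU ν w) := by
  have h : Continuous (fun s => stationaryOU ν w s - w s) :=
    continuous_iff_continuousAt.2 fun t => (hasDerivAt_stationaryOU_sub hν hw hC t).continuousAt
  exact (h.add hw).congr fun s => sub_add_cancel _ _

lemma stationaryOU_eq_sub_integral (hν : 0 < ν) (hw : Continuous w)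
    (hC : ∀ s, |w s| ≤ C * (1 + |s|)) (t : ℝ) :
    stationaryOU ν w t =
      (stationaryOU ν w 0 - w 0) - ν * (∫ s in (0:ℝ)..t, stationaryOU ν w s) + w t := by
  have hftc := intervalIntegral.integral_eq_sub_of_hasDerivAt
    (fun s _ => hasDerivAt_stationaryOU_sub hν hw hC s)
    ((continuous_const.mul (continuous_stationaryOU hν hw hC)).intervalIntegrable 0 t)
  rw [intervalIntegral.integral_const_mul] at hftc
  linarith

lemma tendsto_stationaryOU_div_cocompact (hν : 0 < ν) (hw : Continuous w)
    (hC : ∀ s, |w s| ≤ C * (1 + |s|))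
    (hw_sub : Tendsto (fun t => w t / t) (cocompact ℝ) (𝓝 0)) :
    Tendsto (fun t => stationaryOU ν w t / t) (cocompact ℝ) (𝓝 0) := by
  have hC0 : 0 ≤ C := by simpa using (abs_nonneg (w 0)).trans (hC 0)
  have hdiff (t τ : ℝ) (ht : 1 ≤ |t|) : |w t - w (t + τ)| ≤ 4 * C * (1 + |τ|) * |t| := by
    have := abs_sub (w t) (w (t + τ))
    nlinarith [hC t, hC (t + τ), abs_add_le t τ, abs_nonneg τ,
      mul_nonneg hC0 (mul_nonneg (sub_nonneg.2 ht) (abs_nonneg τ)),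
      mul_nonneg hC0 (sub_nonneg.2 ht)]
  have hlim (τ : ℝ) :
      Tendsto (fun t => ν * exp (ν * τ) * (w t - w (t + τ)) / t) (cocompact ℝ) (𝓝 0) := by
    simpa [mul_div_assoc, sub_div] using
      ((hw_sub.sub (tendsto_comp_add_div_cocompact hw_sub τ)).const_mul (ν * exp (ν * τ)))
  have hbig : ∀ᶠ t : ℝ in cocompact ℝ, 1 ≤ |t| :=
    tendsto_norm_cocompact_atTop.eventually_ge_atTop 1
  simp_rw [stationaryOU_eq_integral hν hw hC, ← integral_div]
  -- dominated convergence needs a countably generated filter; `atBot ⊔ atTop` is one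
  rw [cocompact_eq_atBot_atTop] at hbig hlim ⊢
  simpa using tendsto_integral_filter_of_dominated_convergence
    (fun τ => 4 * ν * C * (exp (ν * τ) * (1 + |τ|)))
    (Eventually.of_forall fun t => by fun_prop)
    (hbig.mono fun t ht => ae_of_all _ fun τ => by
      simp only [norm_div, norm_mul, Real.norm_eq_abs]
      rw [abs_of_pos hν, abs_of_pos (exp_pos _), div_le_iff₀ (by linarith)]
      calc ν * exp (ν * τ) * |w t - w (t + τ)|
          ≤ ν * exp (ν * τ) * (4 * C * (1 + |τ|) * |t|) := by gcongr; exact hdiff t τ ht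
        _ = _ := by ring)
    ((integrableOn_exp_mul_mul_one_add_abs_Iic hν).const_mul (4 * ν * C))
    (ae_of_all _ hlim)

end

theorem stmt_14_general (ν : ℝ) (hν : 0 < ν)
    (w : ℝ → ℝ) (hw_cont : Continuous w)
    (hw_sub : Tendsto (fun t => w t / t) atTop (nhds 0) ∧
      Tendsto (fun t => w t / t) atBot (nhds 0)) :
    -- the integrals defining z*(θ_t ω) converge
    (∀ t : ℝ, IntegrableOn (fun τ => Real.exp (ν * τ) * w (t + τ)) (Set.Iic 0)) ∧
    -- t ↦ z*(θ_t ω) is continuous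
    Continuous (fun t => -ν * (∫ τ in Set.Iic (0:ℝ), Real.exp (ν * τ) * w (t + τ)) + w t) ∧
    -- it solves the integral form of dz = -ν z dt + dω
    (∀ t : ℝ,
      -ν * (∫ τ in Set.Iic (0:ℝ), Real.exp (ν * τ) * w (t + τ)) + w t =
        (-ν * ∫ τ in Set.Iic (0:ℝ), Real.exp (ν * τ) * w τ)
          - ν * (∫ s in (0:ℝ)..t,
              (-ν * (∫ τ in Set.Iic (0:ℝ), Real.exp (ν * τ) * w (s + τ)) + w s))
          + w t) ∧
    -- sublinear growth
    (Tendsto (fun t : ℝ =>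
        |(-ν * (∫ τ in Set.Iic (0:ℝ), Real.exp (ν * τ) * w (t + τ)) + w t)| / |t|)
      atTop (nhds 0) ∧
     Tendsto (fun t : ℝ =>
        |(-ν * (∫ τ in Set.Iic (0:ℝ), Real.exp (ν * τ) * w (t + τ)) + w t)| / |t|)
      atBot (nhds 0)) := by
  have hw_sub' : Tendsto (fun t => w t / t) (cocompact ℝ) (𝓝 0) := by
    rw [cocompact_eq_atBot_atTop]
    exact hw_sub.2.sup hw_sub.1
  obtain ⟨C, hC⟩ := exists_abs_le_mul_one_add_abs hw_cont hw_sub'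
  have hgrowth : Tendsto (fun t => |stationaryOU ν w t| / |t|) (cocompact ℝ) (𝓝 0) := by
    simpa only [abs_div, abs_zero] using
      (tendsto_stationaryOU_div_cocompact hν hw_cont hC hw_sub').abs
  refine ⟨integrableOn_exp_mul_mul_comp_add hν hw_cont hC,
    continuous_stationaryOU hν hw_cont hC, fun t => ?_,
    hgrowth.mono_left atTop_le_cocompact, hgrowth.mono_left atBot_le_cocompact⟩
  simpa only [stationaryOU, zero_add, add_sub_cancel_right] using
    stationaryOU_eq_sub_integral hν hw_cont hC t

theorem stmt_14 (ν : ℝ) (hν : 0 < ν)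
    (w : ℝ → ℝ) (hw_cont : Continuous w) (hw0 : w 0 = 0)
    (hw_sub : Tendsto (fun t => w t / t) atTop (nhds 0) ∧
      Tendsto (fun t => w t / t) atBot (nhds 0)) :
    -- the integrals defining z*(θ_t ω) converge
    (∀ t : ℝ, IntegrableOn (fun τ => Real.exp (ν * τ) * w (t + τ)) (Set.Iic 0)) ∧
    -- t ↦ z*(θ_t ω) is continuous
    Continuous (fun t => -ν * (∫ τ in Set.Iic (0:ℝ), Real.exp (ν * τ) * w (t + τ)) + w t) ∧
    -- it solves the integral form of dz = -ν z dt + dω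
    (∀ t : ℝ,
      -ν * (∫ τ in Set.Iic (0:ℝ), Real.exp (ν * τ) * w (t + τ)) + w t =
        (-ν * ∫ τ in Set.Iic (0:ℝ), Real.exp (ν * τ) * w τ)
          - ν * (∫ s in (0:ℝ)..t,
              (-ν * (∫ τ in Set.Iic (0:ℝ), Real.exp (ν * τ) * w (s + τ)) + w s))
          + w t) ∧
    -- sublinear growth
    (Tendsto (fun t : ℝ =>
        |(-ν * (∫ τ in Set.Iic (0:ℝ), Real.exp (ν * τ) * w (t + τ)) + w t)| / |t|)
      atTop (nhds 0) ∧
     Tendsto (fun t : ℝ =>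
        |(-ν * (∫ τ in Set.Iic (0:ℝ), Real.exp (ν * τ) * w (t + τ)) + w t)| / |t|)
      atBot (nhds 0)) :=
  stmt_14_general ν hν w hw_cont hw_sub
end

section
/- Let A be a self-adjoint operator on a separable Hilbert space H with compact resolvent, eigenvalues μ₁ ≥ μ₂ ≥ ⋯ → −∞ (for −A) and orthonormal eigenbasis {e_j}, generating the semigroup S_A(t). Let C(ω) = Σ_{j=1}^N ν_j z_j*(ω) D_j where D_j ∈ L(H) commute with A and with each other, and z_j* are real random variables over an ergodic flow θ with lim_{t→∞} (1/t)∫₀^t z_j*(θ_s ω) ds = 0 a.s. Define U(t, ω) = S_A(t) exp(∫₀^t C(θ_s ω) ds). Then for each eigenvector e_j, lim_{t→∞} (1/t) log ‖U(t, ω) e_j‖ = μ_j for ω in a set of full measure; i.e., the Lyapunov exponents of the cocycle U equal the eigenvalues μ_j of −A. -/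
/-!
Each `D_i` commutes with `S_A(t)`, hence so do `B(t) = ∫₀ᵗ C(θ_s ω) ds` and `exp B(t)`, and the
eigenvector relation gives `log ‖U(t) e_j‖ = μ_j t + log ‖exp B(t) e_j‖`. Since
`exp (-B(t)) * exp B(t) = 1`, the exponential changes norms by a factor between `e^{-‖B(t)‖}` and
`e^{‖B(t)‖}`, and `‖B(t)‖ = o(t)` because the time averages of the `z_i` vanish; so the second
term is `o(t)`.
-/

open MeasureTheory Filter

open Asymptotics NormedSpace

theorem norm_exp_le_exp_norm {𝔸 : Type*} [NormedRing 𝔸] [NormedAlgebra ℝ 𝔸] [NormOneClass 𝔸]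
    (x : 𝔸) : ‖exp x‖ ≤ Real.exp ‖x‖ := by
  rw [exp_eq_tsum ℝ, Real.exp_eq_exp_ℝ]
  refine tsum_of_norm_bounded (expSeries_div_hasSum_exp ‖x‖) fun n => ?_
  rw [norm_smul, norm_inv, RCLike.norm_natCast, ← div_eq_inv_mul]
  gcongr
  exact norm_pow_le x n

section

variable {E : Type*} [NormedAddCommGroup E] [NormedSpace ℝ E]

theorem norm_exp_apply_le (a : E →L[ℝ] E) (v : E) : ‖exp a v‖ ≤ Real.exp ‖a‖ * ‖v‖ := by
  rcases eq_or_ne v 0 with rfl | hv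
  · simp
  have : Nontrivial E := ⟨⟨v, 0, hv⟩⟩
  exact (exp a).le_of_opNorm_le (norm_exp_le_exp_norm a) v

theorem comp_exp_apply_of_commute {S a : E →L[ℝ] E} (h : Commute S a) {v : E} {c : ℝ}
    (hv : S v = c • v) : S.comp (exp a) v = c • exp a v := by
  rw [← ContinuousLinearMap.mul_def, h.exp_right.eq, mul_apply_eq_comp, hv, map_smul]

variable [CompleteSpace E]

theorem norm_le_exp_norm_mul_norm_exp_apply (a : E →L[ℝ] E) (v : E) :
    ‖v‖ ≤ Real.exp ‖a‖ * ‖exp a v‖ := by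
  -- `exp_add_of_commute` is stated for `ℚ`-algebras
  let : NormedAlgebra ℚ (E →L[ℝ] E) := NormedAlgebra.restrictScalars ℚ ℝ (E →L[ℝ] E)
  have hinv : exp (-a) * exp a = 1 := by
    rw [← exp_add_of_commute (Commute.refl a).neg_left, neg_add_cancel, exp_zero]
  calc ‖v‖ = ‖exp (-a) (exp a v)‖ := by rw [← mul_apply_eq_comp, hinv]; rfl
    _ ≤ Real.exp ‖a‖ * ‖exp a v‖ := by simpa using norm_exp_apply_le (-a) (exp a v)

theorem exp_apply_ne_zero (a : E →L[ℝ] E) {v : E} (hv : v ≠ 0) : exp a v ≠ 0 := by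
  intro h
  simpa [h, hv] using norm_le_exp_norm_mul_norm_exp_apply a v

theorem log_norm_comp_exp_apply_of_commute {S a : E →L[ℝ] E} (h : Commute S a) {v : E}
    (hv : v ≠ 0) {c : ℝ} (hSv : S v = Real.exp c • v) :
    Real.log ‖S.comp (exp a) v‖ = c + Real.log ‖exp a v‖ := by
  rw [comp_exp_apply_of_commute h hSv, norm_smul, Real.norm_of_nonneg (Real.exp_pos c).le,
    Real.log_mul (Real.exp_pos c).ne' (norm_ne_zero_iff.2 (exp_apply_ne_zero a hv)), Real.log_exp]

theorem abs_log_norm_exp_apply_sub_le (a : E →L[ℝ] E) {v : E} (hv : v ≠ 0) :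
    |Real.log ‖exp a v‖ - Real.log ‖v‖| ≤ ‖a‖ := by
  have hv' : 0 < ‖v‖ := norm_pos_iff.2 hv
  have hexp : 0 < ‖exp a v‖ := norm_pos_iff.2 (exp_apply_ne_zero a hv)
  have hupper : Real.log ‖exp a v‖ ≤ ‖a‖ + Real.log ‖v‖ := by
    rw [← Real.log_exp ‖a‖, ← Real.log_mul (Real.exp_pos _).ne' hv'.ne']
    exact Real.log_le_log hexp (norm_exp_apply_le a v)
  have hlower : Real.log ‖v‖ ≤ ‖a‖ + Real.log ‖exp a v‖ := by
    rw [← Real.log_exp ‖a‖, ← Real.log_mul (Real.exp_pos _).ne' hexp.ne']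
    exact Real.log_le_log hv' (norm_le_exp_norm_mul_norm_exp_apply a v)
  rw [abs_sub_le_iff]
  constructor <;> linarith

theorem isLittleO_log_norm_exp_apply {α : Type*} {l : Filter α} {B : α → E →L[ℝ] E}
    {g : α → ℝ} (hB : B =o[l] g) {v : E} (hv : v ≠ 0) :
    (fun x => Real.log ‖exp (B x) v‖ - Real.log ‖v‖) =o[l] g :=
  (IsBigO.of_bound 1 (.of_forall fun x => by
    simpa using abs_log_norm_exp_apply_sub_le (B x) hv)).trans_isLittleO hB

end

theorem isLittleO_sum_smul {ι α F : Type*} [NormedAddCommGroup F] [NormedSpace ℝ F]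
    {l : Filter α} {g : α → ℝ} (s : Finset ι) {c : ι → α → ℝ} (D : ι → F)
    (hc : ∀ i ∈ s, c i =o[l] g) : (fun x => ∑ i ∈ s, c i x • D i) =o[l] g :=
  IsLittleO.fun_sum fun i hi => (IsBigO.of_bound ‖D i‖ (.of_forall fun x => by
    rw [norm_smul, mul_comm])).trans_isLittleO (hc i hi)

theorem stmt_15_general {Ω H : Type*} [MeasurableSpace Ω] (P : Measure Ω)
    [NormedAddCommGroup H] [InnerProductSpace ℝ H] [CompleteSpace H]
    (θ : ℝ → Ω → Ω)
    -- the eigen-structure of -A and its semigroup S_A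
    (e : ℕ → H) (he : Orthonormal ℝ e)
    (μ : ℕ → ℝ)
    (SA : ℝ → H →L[ℝ] H)
    (hSA_eig : ∀ (j : ℕ) (t : ℝ), 0 ≤ t → SA t (e j) = Real.exp (μ j * t) • e j)
    -- the perturbation C(ω) = Σ ν_j z_j*(ω) D_j with commuting bounded operators
    (N : ℕ) (ν : Fin N → ℝ) (z : Fin N → Ω → ℝ)
    (Dop : Fin N → H →L[ℝ] H)
    (hDA_comm : ∀ (j : Fin N) (t : ℝ), 0 ≤ t → (SA t).comp (Dop j) = (Dop j).comp (SA t))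
    (hz_avg : ∃ S : Set Ω, MeasurableSet S ∧ P Sᶜ = 0 ∧
      ∀ ω ∈ S, ∀ j : Fin N,
        Tendsto (fun t : ℝ => (∫ s in (0:ℝ)..t, z j (θ s ω)) / t) atTop (nhds 0)) :
    -- the Lyapunov exponents of U(t,ω) = S_A(t) exp(∫₀ᵗ C(θ_s ω) ds) are the μ_j
    ∃ S : Set Ω, MeasurableSet S ∧ P Sᶜ = 0 ∧
      ∀ ω ∈ S, ∀ j : ℕ,
        Tendsto (fun t : ℝ =>
          Real.log ‖(SA t).comp (NormedSpace.exp
            (∑ i : Fin N, (ν i * ∫ s in (0:ℝ)..t, z i (θ s ω)) • Dop i)) (e j)‖ / t)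
          atTop (nhds (μ j)) := by
  obtain ⟨S, hSmeas, hScompl, hS⟩ := hz_avg
  refine ⟨S, hSmeas, hScompl, fun ω hω j => ?_⟩
  set B : ℝ → H →L[ℝ] H := fun t => ∑ i : Fin N, (ν i * ∫ s in (0:ℝ)..t, z i (θ s ω)) • Dop i
  have hB : B =o[atTop] id := isLittleO_sum_smul _ _ fun i _ =>
    ((isLittleO_iff_tendsto fun t ht => by simp [ht]).2 (hS ω hω i)).const_mul_left (ν i)
  have hlog : (fun t => Real.log ‖exp (B t) (e j)‖) =o[atTop] id := by
    simpa [he.1 j] using isLittleO_log_norm_exp_apply hB (he.ne_zero j)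
  have hU : ∀ t > 0, μ j + Real.log ‖exp (B t) (e j)‖ / t =
      Real.log ‖(SA t).comp (exp (B t)) (e j)‖ / t := by
    intro t ht
    have hcomm : Commute (SA t) (B t) :=
      Commute.sum_right _ _ _ fun i _ => Commute.smul_right (hDA_comm i t ht.le) _
    rw [log_norm_comp_exp_apply_of_commute hcomm (he.ne_zero j) (hSA_eig j t ht.le), add_div,
      mul_div_cancel_right₀ _ ht.ne']
  simpa using (tendsto_const_nhds.add hlog.tendsto_div_nhds_zero).congr'
    ((eventually_gt_atTop 0).mono hU)

theorem stmt_15 {Ω H : Type*} [MeasurableSpace Ω] (P : Measure Ω) [IsProbabilityMeasure P]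
    [NormedAddCommGroup H] [InnerProductSpace ℝ H] [CompleteSpace H]
    [TopologicalSpace.SeparableSpace H]
    (θ : ℝ → Ω → Ω)
    (hθ_meas : Measurable fun p : ℝ × Ω => θ p.1 p.2)
    (hθ0 : θ 0 = id)
    (hθ_flow : ∀ s t : ℝ, θ t ∘ θ s = θ (t + s))
    (hθ_pres : ∀ t : ℝ, MeasurePreserving (θ t) P P)
    (hθ_erg : ∀ S : Set Ω, MeasurableSet S → (∀ t : ℝ, θ t ⁻¹' S = S) → P S = 0 ∨ P S = 1)
    -- the eigen-structure of -A and its semigroup S_A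
    (e : ℕ → H) (he : Orthonormal ℝ e)
    (μ : ℕ → ℝ) (hμ_mono : Antitone μ) (hμ_lim : Tendsto μ atTop atBot)
    (SA : ℝ → H →L[ℝ] H)
    (hSA0 : SA 0 = ContinuousLinearMap.id ℝ H)
    (hSA_sem : ∀ s t : ℝ, 0 ≤ s → 0 ≤ t → SA (s + t) = (SA s).comp (SA t))
    (hSA_eig : ∀ (j : ℕ) (t : ℝ), 0 ≤ t → SA t (e j) = Real.exp (μ j * t) • e j)
    -- the perturbation C(ω) = Σ ν_j z_j*(ω) D_j with commuting bounded operators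
    (N : ℕ) (ν : Fin N → ℝ) (z : Fin N → Ω → ℝ)
    (Dop : Fin N → H →L[ℝ] H)
    (hD_comm : ∀ i j : Fin N, (Dop i).comp (Dop j) = (Dop j).comp (Dop i))
    (hDA_comm : ∀ (j : Fin N) (t : ℝ), 0 ≤ t → (SA t).comp (Dop j) = (Dop j).comp (SA t))
    (hz_meas : ∀ j, Measurable (z j))
    (hz_int : ∀ (j : Fin N) (ω : Ω) (t : ℝ),
      IntervalIntegrable (fun s => z j (θ s ω)) volume 0 t)
    (hz_avg : ∃ S : Set Ω, MeasurableSet S ∧ P Sᶜ = 0 ∧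
      ∀ ω ∈ S, ∀ j : Fin N,
        Tendsto (fun t : ℝ => (∫ s in (0:ℝ)..t, z j (θ s ω)) / t) atTop (nhds 0)) :
    -- the Lyapunov exponents of U(t,ω) = S_A(t) exp(∫₀ᵗ C(θ_s ω) ds) are the μ_j
    ∃ S : Set Ω, MeasurableSet S ∧ P Sᶜ = 0 ∧
      ∀ ω ∈ S, ∀ j : ℕ,
        Tendsto (fun t : ℝ =>
          Real.log ‖(SA t).comp (NormedSpace.exp
            (∑ i : Fin N, (ν i * ∫ s in (0:ℝ)..t, z i (θ s ω)) • Dop i)) (e j)‖ / t)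
          atTop (nhds (μ j)) :=
  stmt_15_general P θ e he μ SA hSA_eig N ν z Dop hDA_comm hz_avg
end

section
/- In the setting of the previous statement, fix ε > 0, let μ_s < 0 < μ_u be consecutive eigenvalues, and let Π^s be the spectral projection onto span{e_i : μ_i ≤ μ_s}. Suppose for each j there is T(ε) > 0 with |∫₀^t z_j*(θ_s ω) ds| ≤ (ε/δ) t for all t ≥ T(ε), where δ = Σ_j |ν_j| ‖D_j‖. Then for all t ≥ 0: ‖exp(∫₀^t C(θ_s ω) ds) S_A(t) Π^s‖ ≤ K(ω) e^{(μ_s + ε)t}, where K(ω) = exp( Σ_{j=1}^N |ν_j| ‖D_j‖ max_{r ∈ [0, T(ε)]} |∫₀^r z_j*(θ_s ω) ds| ). Moreover, if each process satisfies lim_{t→∞}(1/t)∫₀^t |z_j*(θ_s ω)| ds = E|z_j*| < ∞, then K is tempered: lim_{t→∞} (log⁺ K(θ_t ω))/t = 0. -/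
/-!
The cocycle satisfies `‖exp(∫₀ᵗ C)‖ ≤ exp (Σ_j |ν_j| ‖D_j‖ |∫₀ᵗ z_j*|)`. For `t ≤ T` each
`|∫₀ᵗ z_j*|` is at most its maximum over `[0, T]`, and for `t ≥ T` the growth assumption makes
the whole exponent at most `ε t`; together with the decay `e^{μ_s t}` of `S_A(t) Π^s` this gives
the bound. For temperedness, the maximum defining `log K(θ_t ω)` is at most
`∫ₜ^{t+T} |z_j*(θ_s ω)| ds`, and the ergodic averages `(1/t) ∫₀ᵗ |z_j*|` converge, so this
window integral is `o(t)`.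
-/

open MeasureTheory Filter Set

section NormExp

variable {𝔸 : Type*} [NormedRing 𝔸]

lemma norm_pow_le_of_norm_one_le (h1 : ‖(1 : 𝔸)‖ ≤ 1) (x : 𝔸) : ∀ n : ℕ, ‖x ^ n‖ ≤ ‖x‖ ^ n
  | 0 => by simpa using h1
  | n + 1 => norm_pow_le' x n.succ_pos

variable [NormedAlgebra ℝ 𝔸]

/-- Stated with `‖1‖ ≤ 1` rather than `NormOneClass` so that it applies to operators on the
zero space as well. -/
lemma norm_exp_le_exp_norm_of_norm_one_le (h1 : ‖(1 : 𝔸)‖ ≤ 1) (x : 𝔸) :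
    ‖NormedSpace.exp x‖ ≤ Real.exp ‖x‖ := by
  rw [NormedSpace.exp_eq_tsum ℝ, Real.exp_eq_exp_ℝ, NormedSpace.exp_eq_tsum_div]
  refine (norm_tsum_le_tsum_norm (NormedSpace.norm_expSeries_summable' x)).trans ?_
  refine Summable.tsum_le_tsum (fun n => ?_) (NormedSpace.norm_expSeries_summable' x)
    (Real.summable_pow_div_factorial ‖x‖)
  rw [norm_smul, norm_inv, Real.norm_natCast, div_eq_inv_mul]
  exact mul_le_mul_of_nonneg_left (norm_pow_le_of_norm_one_le h1 x n) (by positivity)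

lemma norm_exp_sum_smul_le {ι : Type*} (s : Finset ι) (h1 : ‖(1 : 𝔸)‖ ≤ 1) (a : ι → ℝ)
    (D : ι → 𝔸) :
    ‖NormedSpace.exp (∑ i ∈ s, a i • D i)‖ ≤ Real.exp (∑ i ∈ s, |a i| * ‖D i‖) := by
  refine (norm_exp_le_exp_norm_of_norm_one_le h1 _).trans (Real.exp_le_exp.2 ?_)
  refine (norm_sum_le _ _).trans (Finset.sum_le_sum fun i _ => ?_)
  rw [norm_smul, Real.norm_eq_abs]

end NormExp

/-- With `g = z_j ∘ θ_· ω` this is the `max_{r ∈ [0, T]} |∫₀ʳ z_j*(θ_s ω) ds|` in `log K(ω)`. -/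
noncomputable def supAbsPrimitive (g : ℝ → ℝ) (T : ℝ) : ℝ :=
  sSup ((fun r => |∫ s in (0:ℝ)..r, g s|) '' Icc 0 T)

section SupAbsPrimitive

variable {g : ℝ → ℝ} {T : ℝ}

lemma supAbsPrimitive_nonneg : 0 ≤ supAbsPrimitive g T :=
  Real.sSup_nonneg <| forall_mem_image.2 fun _ _ => abs_nonneg _

lemma abs_integral_le_supAbsPrimitive (hg : ∀ t, IntervalIntegrable g volume 0 t) {t : ℝ}
    (ht : t ∈ Icc 0 T) : |∫ s in (0:ℝ)..t, g s| ≤ supAbsPrimitive g T := by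
  have hcont : Continuous fun r => |∫ s in (0:ℝ)..r, g s| :=
    (intervalIntegral.continuous_primitive (fun a b => (hg a).symm.trans (hg b)) 0).abs
  exact le_csSup (isCompact_Icc.image hcont).bddAbove ⟨t, ht, rfl⟩

lemma supAbsPrimitive_comp_add_le (hg : ∀ t, IntervalIntegrable g volume 0 t) (hT : 0 ≤ T)
    (t : ℝ) : supAbsPrimitive (fun s => g (s + t)) T ≤ ∫ s in t..t + T, |g s| := by
  have hg' : ∀ a b, IntervalIntegrable (fun s => |g s|) volume a b :=
    fun a b => ((hg a).symm.trans (hg b)).abs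
  refine Real.sSup_le (forall_mem_image.2 fun r ⟨hr0, hrT⟩ => ?_)
    (intervalIntegral.integral_nonneg (by linarith) fun _ _ => abs_nonneg _)
  rw [intervalIntegral.integral_comp_add_right g t, zero_add]
  calc |∫ s in t..r + t, g s| ≤ ∫ s in t..r + t, |g s| :=
        intervalIntegral.abs_integral_le_integral_abs (by linarith)
    _ ≤ ∫ s in t..t + T, |g s| :=
        intervalIntegral.integral_mono_interval le_rfl (by linarith) (by linarith)
          (Eventually.of_forall fun _ => abs_nonneg _) (hg' t (t + T))

end SupAbsPrimitive

lemma tendsto_sub_comp_add_div_atTop {F : ℝ → ℝ} {L : ℝ}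
    (hF : Tendsto (fun t => F t / t) atTop (nhds L)) (T : ℝ) :
    Tendsto (fun t => (F (t + T) - F t) / t) atTop (nhds 0) := by
  have hshift : Tendsto (fun t => F (t + T) / (t + T)) atTop (nhds L) :=
    hF.comp (tendsto_atTop_add_const_right atTop T tendsto_id)
  have hratio : Tendsto (fun t => (t + T) / t) atTop (nhds 1) := by
    have h := (tendsto_const_nhds (x := (1 : ℝ))).add
      ((tendsto_const_nhds (x := T)).div_atTop tendsto_id)
    rw [add_zero] at h
    refine h.congr' ?_
    filter_upwards [eventually_gt_atTop 0] with t ht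
    simp only [id]
    field_simp
  have h := (hshift.mul hratio).sub hF
  rw [mul_one, sub_self] at h
  refine h.congr' ?_
  filter_upwards [eventually_gt_atTop 0, eventually_gt_atTop (-T)] with t ht htT
  have : t + T ≠ 0 := by linarith
  field_simp

lemma tendsto_supAbsPrimitive_comp_add_div_atTop {g : ℝ → ℝ}
    (hg : ∀ t, IntervalIntegrable g volume 0 t) {T L : ℝ} (hT : 0 ≤ T)
    (hmean : Tendsto (fun t => (∫ s in (0:ℝ)..t, |g s|) / t) atTop (nhds L)) :
    Tendsto (fun t => supAbsPrimitive (fun s => g (s + t)) T / t) atTop (nhds 0) := by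
  refine tendsto_of_tendsto_of_tendsto_of_le_of_le' tendsto_const_nhds
    (tendsto_sub_comp_add_div_atTop hmean T) ?_ ?_ <;>
    filter_upwards [eventually_gt_atTop 0] with t ht
  · exact div_nonneg supAbsPrimitive_nonneg ht.le
  · rw [intervalIntegral.integral_interval_sub_left ((hg _).abs) ((hg _).abs)]
    exact div_le_div_of_nonneg_right (supAbsPrimitive_comp_add_le hg hT t) ht.le

lemma sum_mul_le_of_le_div_sum {ι : Type*} (s : Finset ι) {c a : ι → ℝ} {ε t : ℝ}
    (hc : ∀ i ∈ s, 0 ≤ c i) (hεt : 0 ≤ ε * t) (ha : ∀ i ∈ s, a i ≤ ε / (∑ j ∈ s, c j) * t) :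
    ∑ i ∈ s, c i * a i ≤ ε * t := by
  calc ∑ i ∈ s, c i * a i ≤ ∑ i ∈ s, c i * (ε / (∑ j ∈ s, c j) * t) :=
        Finset.sum_le_sum fun i hi => mul_le_mul_of_nonneg_left (ha i hi) (hc i hi)
    _ = (∑ j ∈ s, c j) * (ε / (∑ j ∈ s, c j)) * t := by rw [← Finset.sum_mul]; ring
    _ ≤ ε * t := by
        rcases (Finset.sum_nonneg hc).eq_or_lt with hzero | hpos
        · simpa [← hzero] using hεt
        · rw [mul_div_cancel₀ _ hpos.ne']

/-- Below `T` each primitive is bounded by its running maximum, beyond `T` by the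
assumed linear growth. -/
lemma sum_mul_abs_integral_le {ι : Type*} (s : Finset ι) {c : ι → ℝ} {g : ι → ℝ → ℝ}
    {ε T t : ℝ} (hc : ∀ i ∈ s, 0 ≤ c i) (hg : ∀ i t, IntervalIntegrable (g i) volume 0 t)
    (hε : 0 ≤ ε) (ht : 0 ≤ t)
    (hgrowth : ∀ i ∈ s, T ≤ t → |∫ u in (0:ℝ)..t, g i u| ≤ ε / (∑ j ∈ s, c j) * t) :
    ∑ i ∈ s, c i * |∫ u in (0:ℝ)..t, g i u| ≤
      ∑ i ∈ s, c i * supAbsPrimitive (g i) T + ε * t := by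
  rcases le_total t T with htT | hTt
  · refine le_add_of_le_of_nonneg (Finset.sum_le_sum fun i hi => ?_) (mul_nonneg hε ht)
    exact mul_le_mul_of_nonneg_left (abs_integral_le_supAbsPrimitive (hg i) ⟨ht, htT⟩) (hc i hi)
  · refine le_add_of_nonneg_of_le (Finset.sum_nonneg fun i hi => ?_) ?_
    · exact mul_nonneg (hc i hi) supAbsPrimitive_nonneg
    · exact sum_mul_le_of_le_div_sum s hc (mul_nonneg hε ht) fun i hi => hgrowth i hi hTt

theorem stmt_16_general {Ω H : Type*}
    [NormedAddCommGroup H] [InnerProductSpace ℝ H]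
    (θ : ℝ → Ω → Ω)
    (hθ_flow : ∀ s t : ℝ, θ t ∘ θ s = θ (t + s))
    (SA : ℝ → H →L[ℝ] H) (Ps : H →L[ℝ] H)
    (μs : ℝ)
    (hSA_bd : ∀ t : ℝ, 0 ≤ t → ‖(SA t).comp Ps‖ ≤ Real.exp (μs * t))
    (N : ℕ) (ν : Fin N → ℝ) (z : Fin N → Ω → ℝ) (Dop : Fin N → H →L[ℝ] H)
    (hz_int : ∀ (j : Fin N) (ω : Ω) (t : ℝ),
      IntervalIntegrable (fun s => z j (θ s ω)) volume 0 t)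
    (ε T : ℝ) (hε : 0 < ε) (hT : 0 < T)
    (S : Set Ω)
    (hδ : ∀ ω ∈ S, ∀ j : Fin N, ∀ t : ℝ, T ≤ t →
      |∫ s in (0:ℝ)..t, z j (θ s ω)| ≤ ε / (∑ i : Fin N, |ν i| * ‖Dop i‖) * t) :
    -- the exponential bound with tempered constant K(ω)
    (∀ ω ∈ S, ∀ t : ℝ, 0 ≤ t →
      ‖(NormedSpace.exp (∑ i : Fin N, (ν i * ∫ s in (0:ℝ)..t, z i (θ s ω)) • Dop i)).comp
          ((SA t).comp Ps)‖ ≤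
        Real.exp (∑ i : Fin N, |ν i| * ‖Dop i‖ *
            sSup ((fun r => |∫ s in (0:ℝ)..r, z i (θ s ω)|) '' Set.Icc 0 T)) *
          Real.exp ((μs + ε) * t)) ∧
    -- moreover, K is tempered
    ((∃ Ez : Fin N → ℝ, ∀ ω ∈ S, ∀ j : Fin N,
        Tendsto (fun t : ℝ => (∫ s in (0:ℝ)..t, |z j (θ s ω)|) / t) atTop (nhds (Ez j))) →
      ∀ ω ∈ S,
        Tendsto (fun t : ℝ => max (Real.log
            (Real.exp (∑ i : Fin N, |ν i| * ‖Dop i‖ *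
              sSup ((fun r => |∫ s in (0:ℝ)..r, z i (θ s (θ t ω))|) '' Set.Icc 0 T)))) 0 / t)
          atTop (nhds 0)) := by
  have hc : ∀ i ∈ Finset.univ, 0 ≤ |ν i| * ‖Dop i‖ := fun i _ => by positivity
  refine ⟨fun ω hω t ht => ?_, fun ⟨Ez, hEz⟩ ω hω => ?_⟩
  · have hexp := norm_exp_sum_smul_le Finset.univ (ContinuousLinearMap.norm_id_le)
      (fun i => ν i * ∫ s in (0:ℝ)..t, z i (θ s ω)) Dop
    have hsum := sum_mul_abs_integral_le Finset.univ hc (hz_int · ω) hε.le ht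
      (fun i _ => hδ ω hω i t)
    calc _ ≤ _ := ContinuousLinearMap.opNorm_comp_le _ _
      _ ≤ Real.exp (∑ i, |ν i| * ‖Dop i‖ * |∫ s in (0:ℝ)..t, z i (θ s ω)|) *
            Real.exp (μs * t) := by
          refine mul_le_mul (hexp.trans_eq ?_) (hSA_bd t ht) (norm_nonneg _) (Real.exp_pos _).le
          simp only [abs_mul, mul_right_comm]
      _ ≤ Real.exp (∑ i, |ν i| * ‖Dop i‖ * supAbsPrimitive (fun s => z i (θ s ω)) T + ε * t) *
            Real.exp (μs * t) := by gcongr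
      _ = _ := by rw [← Real.exp_add, ← Real.exp_add]; congr 1; unfold supAbsPrimitive; ring
  · have hflow : ∀ t s, θ s (θ t ω) = θ (s + t) ω := fun t s => congrFun (hθ_flow t s) ω
    simp only [Real.log_exp, hflow]
    change Tendsto (fun t => max (∑ i, |ν i| * ‖Dop i‖ *
      supAbsPrimitive (fun s => z i (θ (s + t) ω)) T) 0 / t) atTop (nhds 0)
    have hK : ∀ t : ℝ,
        0 ≤ ∑ i, |ν i| * ‖Dop i‖ * supAbsPrimitive (fun s => z i (θ (s + t) ω)) T :=
      fun t => Finset.sum_nonneg fun i hi => mul_nonneg (hc i hi) supAbsPrimitive_nonneg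
    have hlim := tendsto_finsetSum Finset.univ fun i _ =>
      (tendsto_supAbsPrimitive_comp_add_div_atTop (hz_int i ω) hT.le (hEz ω hω i)).const_mul
        (|ν i| * ‖Dop i‖)
    simp only [mul_zero, Finset.sum_const_zero] at hlim
    simp only [max_eq_left (hK _), Finset.sum_div, mul_div_assoc]
    exact hlim

theorem stmt_16 {Ω H : Type*} [MeasurableSpace Ω] (P : Measure Ω) [IsProbabilityMeasure P]
    [NormedAddCommGroup H] [InnerProductSpace ℝ H] [CompleteSpace H]
    [TopologicalSpace.SeparableSpace H]
    (θ : ℝ → Ω → Ω)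
    (hθ_meas : Measurable fun p : ℝ × Ω => θ p.1 p.2)
    (hθ0 : θ 0 = id)
    (hθ_flow : ∀ s t : ℝ, θ t ∘ θ s = θ (t + s))
    (hθ_pres : ∀ t : ℝ, MeasurePreserving (θ t) P P)
    (SA : ℝ → H →L[ℝ] H) (Ps : H →L[ℝ] H) (hPs : Ps.comp Ps = Ps)
    (μs μu : ℝ) (hμs : μs < 0) (hμu : 0 < μu)
    (hSA_bd : ∀ t : ℝ, 0 ≤ t → ‖(SA t).comp Ps‖ ≤ Real.exp (μs * t))
    (N : ℕ) (ν : Fin N → ℝ) (z : Fin N → Ω → ℝ) (Dop : Fin N → H →L[ℝ] H)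
    (hz_meas : ∀ j, Measurable (z j))
    (hz_int : ∀ (j : Fin N) (ω : Ω) (t : ℝ),
      IntervalIntegrable (fun s => z j (θ s ω)) volume 0 t)
    (ε T : ℝ) (hε : 0 < ε) (hT : 0 < T)
    (S : Set Ω) (hS_meas : MeasurableSet S) (hS_full : P Sᶜ = 0)
    (hS_inv : ∀ t : ℝ, ∀ ω ∈ S, θ t ω ∈ S)
    (hδ : ∀ ω ∈ S, ∀ j : Fin N, ∀ t : ℝ, T ≤ t →
      |∫ s in (0:ℝ)..t, z j (θ s ω)| ≤ ε / (∑ i : Fin N, |ν i| * ‖Dop i‖) * t) :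
    -- the exponential bound with tempered constant K(ω)
    (∀ ω ∈ S, ∀ t : ℝ, 0 ≤ t →
      ‖(NormedSpace.exp (∑ i : Fin N, (ν i * ∫ s in (0:ℝ)..t, z i (θ s ω)) • Dop i)).comp
          ((SA t).comp Ps)‖ ≤
        Real.exp (∑ i : Fin N, |ν i| * ‖Dop i‖ *
            sSup ((fun r => |∫ s in (0:ℝ)..r, z i (θ s ω)|) '' Set.Icc 0 T)) *
          Real.exp ((μs + ε) * t)) ∧
    -- moreover, K is tempered
    ((∃ Ez : Fin N → ℝ, ∀ ω ∈ S, ∀ j : Fin N,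
        Tendsto (fun t : ℝ => (∫ s in (0:ℝ)..t, |z j (θ s ω)|) / t) atTop (nhds (Ez j))) →
      ∀ ω ∈ S,
        Tendsto (fun t : ℝ => max (Real.log
            (Real.exp (∑ i : Fin N, |ν i| * ‖Dop i‖ *
              sSup ((fun r => |∫ s in (0:ℝ)..r, z i (θ s (θ t ω))|) '' Set.Icc 0 T)))) 0 / t)
          atTop (nhds 0)) :=
  stmt_16_general θ hθ_flow SA Ps μs hSA_bd N ν z Dop hz_int ε T hε hT S hδ
end
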